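/- Let ℓ ≥ 1 and consider the game NN(2ℓ+1, ℓ+1). If a position p lies in S_ℓ and p' is obtained from p by a legal move of NN(2ℓ+1, ℓ+1), then p' does not lie in S_ℓ. (In other words, no legal move leads from S_ℓ to S_ℓ.) -/
import Mathlib

/-- Window sum `s i = p i + p (i+1) + ... + p (i+ℓ-1)` for the game NN(2ℓ+1, ℓ+1). -/
def windowOdd (ℓ : ℕ) (p : ℕ → ℕ) (i : ℕ) : ℕ := ∑ j ∈ Finset.Icc i (i + ℓ - 1), p j

/-- `s* = min` of the window sums `s i` over `i = 2, ..., ℓ+1` for NN(2ℓ+1, ℓ+1). -/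
noncomputable def sstarOdd (ℓ : ℕ) (p : ℕ → ℕ) : ℕ :=
  sInf {x | ∃ i, 2 ≤ i ∧ i ≤ ℓ + 1 ∧ x = windowOdd ℓ p i}

/-- The set `S_ℓ` for NN(2ℓ+1, ℓ+1): the sum equation (SE) `A = B` and the
minimum equation (ME) `m = s*`. -/
def memSOdd (ℓ : ℕ) (p : ℕ → ℕ) : Prop :=
  (∑ i ∈ Finset.Icc 1 ℓ, p i) = (∑ i ∈ Finset.Icc (ℓ + 2) (2 * ℓ + 1), p i) ∧
  min (p 1) (p (2 * ℓ + 1)) = sstarOdd ℓ p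

/-- The allowed move sets of NN(n, k): the k-element intervals
`{i, i+1, ..., i+k-1}` for `i = 1, ..., n-k+1`, and the end set `{1, n}`. -/
def Allowed (n k : ℕ) (M : Finset ℕ) : Prop :=
  (∃ i, 1 ≤ i ∧ i + k - 1 ≤ n ∧ M = Finset.Icc i (i + k - 1)) ∨ M = {1, n}

/-- A legal move of NN(n, k) from `p` to `p'`: every stack weakly decreases,
some stack strictly decreases, and the set of stacks that decrease is
contained in some allowed move set. -/
def LegalMove (n k : ℕ) (p p' : ℕ → ℕ) : Prop :=
  (∀ j ∈ Finset.Icc 1 n, p' j ≤ p j) ∧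
  (∃ j ∈ Finset.Icc 1 n, p' j < p j) ∧
  (∃ M : Finset ℕ, Allowed n k M ∧ ∀ j ∈ Finset.Icc 1 n, p' j < p j → j ∈ M)

lemma sstar_exists (ℓ : ℕ) (hℓ : 1 ≤ ℓ) (p : ℕ → ℕ) :
    ∃ i, 2 ≤ i ∧ i ≤ ℓ + 1 ∧ sstarOdd ℓ p = windowOdd ℓ p i := by
  have hne : {x | ∃ i, 2 ≤ i ∧ i ≤ ℓ + 1 ∧ x = windowOdd ℓ p i}.Nonempty :=
    ⟨windowOdd ℓ p 2, 2, le_rfl, by omega, rfl⟩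
  have h := Nat.sInf_mem hne
  simpa [sstarOdd] using h

lemma sstar_le (ℓ : ℕ) (p : ℕ → ℕ) (i : ℕ) (h1 : 2 ≤ i) (h2 : i ≤ ℓ + 1) :
    sstarOdd ℓ p ≤ windowOdd ℓ p i :=
  Nat.sInf_le ⟨i, h1, h2, rfl⟩

/-- In NN(2ℓ+1, ℓ+1) with ℓ ≥ 1, no legal move leads from `S_ℓ` to `S_ℓ`. -/
theorem nn_odd_no_move_from_S_to_S (ℓ : ℕ) (hℓ : 1 ≤ ℓ) (p p' : ℕ → ℕ)
    (hp : memSOdd ℓ p) (hmove : LegalMove (2 * ℓ + 1) (ℓ + 1) p p') : ¬ memSOdd ℓ p' := by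
  intro hp'
  obtain ⟨hSE, hME⟩ := hp
  obtain ⟨hSE', hME'⟩ := hp'
  obtain ⟨hle, ⟨jst, hjstmem, hjstdec⟩, ⟨M, hM, hsupp⟩⟩ := hmove
  have hjst : 1 ≤ jst ∧ jst ≤ 2 * ℓ + 1 := Finset.mem_Icc.mp hjstmem
  -- sum decompositions
  have hA : ∑ j ∈ Finset.Icc 1 ℓ, p j
      = (∑ j ∈ Finset.Icc 1 ℓ, p' j) + ∑ j ∈ Finset.Icc 1 ℓ, (p j - p' j) := by
    rw [← Finset.sum_add_distrib]
    refine Finset.sum_congr rfl (fun j hj => ?_)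
    have hj' := Finset.mem_Icc.mp hj
    have := hle j (Finset.mem_Icc.mpr ⟨hj'.1, by omega⟩)
    omega
  have hB : ∑ j ∈ Finset.Icc (ℓ + 2) (2 * ℓ + 1), p j
      = (∑ j ∈ Finset.Icc (ℓ + 2) (2 * ℓ + 1), p' j)
        + ∑ j ∈ Finset.Icc (ℓ + 2) (2 * ℓ + 1), (p j - p' j) := by
    rw [← Finset.sum_add_distrib]
    refine Finset.sum_congr rfl (fun j hj => ?_)
    have hj' := Finset.mem_Icc.mp hj
    have := hle j (Finset.mem_Icc.mpr ⟨by omega, hj'.2⟩)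
    omega
  have hD : (∑ j ∈ Finset.Icc 1 ℓ, (p j - p' j))
      = ∑ j ∈ Finset.Icc (ℓ + 2) (2 * ℓ + 1), (p j - p' j) := by omega
  rcases hM with ⟨i, hi1, hi2, rfl⟩ | rfl
  · -- interval move set Icc i (i+ℓ)
    have hi2' : i ≤ ℓ + 1 := by omega
    have hsupp' : ∀ j, 1 ≤ j → j ≤ 2 * ℓ + 1 → p' j < p j → i ≤ j ∧ j ≤ i + ℓ := by
      intro j h1 h2 h3
      have := hsupp j (Finset.mem_Icc.mpr ⟨h1, h2⟩) h3
      rw [Finset.mem_Icc] at this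
      omega
    have hfix : ∀ j, 1 ≤ j → j ≤ 2 * ℓ + 1 → (j < i ∨ i + ℓ < j) → p' j = p j := by
      intro j h1 h2 h3
      have h4 := hle j (Finset.mem_Icc.mpr ⟨h1, h2⟩)
      rcases eq_or_lt_of_le h4 with h | h
      · exact h
      · have := hsupp' j h1 h2 h
        omega
    -- the two end stacks do not change
    have h1fix : p' 1 = p 1 := by
      by_cases hi : 2 ≤ i
      · exact hfix 1 (by omega) (by omega) (by omega)
      · have hi0 : i = 1 := by omega
        have hDB0 : ∑ j ∈ Finset.Icc (ℓ + 2) (2 * ℓ + 1), (p j - p' j) = 0 :=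
          Finset.sum_eq_zero (fun t ht => by
            have ht' := Finset.mem_Icc.mp ht
            have := hfix t (by omega) (by omega) (by omega)
            omega)
        have hDA0 : ∑ j ∈ Finset.Icc 1 ℓ, (p j - p' j) = 0 := by omega
        have h1 := (Finset.sum_eq_zero_iff.mp hDA0) 1 (Finset.mem_Icc.mpr ⟨le_rfl, hℓ⟩)
        have := hle 1 (Finset.mem_Icc.mpr ⟨le_rfl, by omega⟩)
        omega
    have hnfix : p' (2 * ℓ + 1) = p (2 * ℓ + 1) := by
      by_cases hi : i ≤ ℓ
      · exact hfix (2 * ℓ + 1) (by omega) (by omega) (by omega)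
      · have hi0 : i = ℓ + 1 := by omega
        have hDA0 : ∑ j ∈ Finset.Icc 1 ℓ, (p j - p' j) = 0 :=
          Finset.sum_eq_zero (fun t ht => by
            have ht' := Finset.mem_Icc.mp ht
            have := hfix t (by omega) (by omega) (by omega)
            omega)
        have hDB0 : ∑ j ∈ Finset.Icc (ℓ + 2) (2 * ℓ + 1), (p j - p' j) = 0 := by omega
        have h1 := (Finset.sum_eq_zero_iff.mp hDB0) (2 * ℓ + 1)
          (Finset.mem_Icc.mpr ⟨by omega, le_rfl⟩)
        have := hle (2 * ℓ + 1) (Finset.mem_Icc.mpr ⟨by omega, le_rfl⟩)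
        omega
    -- the two minima agree
    have hsseq : sstarOdd ℓ p' = sstarOdd ℓ p := by
      rw [h1fix, hnfix] at hME'
      exact hME'.symm.trans hME
    -- a minimizing window of p
    obtain ⟨j0, hj01, hj02, hj03⟩ := sstar_exists ℓ hℓ p
    have hw1 : windowOdd ℓ p' j0 ≤ windowOdd ℓ p j0 := by
      unfold windowOdd
      exact Finset.sum_le_sum (fun t ht => by
        have ht' := Finset.mem_Icc.mp ht
        exact hle t (Finset.mem_Icc.mpr ⟨by omega, by omega⟩))
    have hw2 : sstarOdd ℓ p' ≤ windowOdd ℓ p' j0 := sstar_le ℓ p' j0 hj01 hj02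
    have hweq0 : windowOdd ℓ p' j0 = windowOdd ℓ p j0 := by omega
    -- the minimizing window is untouched
    have hwin : ∀ t, j0 ≤ t → t ≤ j0 + ℓ - 1 → p' t = p t := by
      intro t h1 h2
      by_contra hne
      have hlt : p' t < p t :=
        lt_of_le_of_ne (hle t (Finset.mem_Icc.mpr ⟨by omega, by omega⟩)) hne
      have hstrict : (∑ j ∈ Finset.Icc j0 (j0 + ℓ - 1), p' j)
          < ∑ j ∈ Finset.Icc j0 (j0 + ℓ - 1), p j := by
        refine Finset.sum_lt_sum (fun u hu => ?_) ⟨t, Finset.mem_Icc.mpr ⟨h1, h2⟩, hlt⟩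
        have hu' := Finset.mem_Icc.mp hu
        exact hle u (Finset.mem_Icc.mpr ⟨by omega, by omega⟩)
      have : windowOdd ℓ p' j0 < windowOdd ℓ p j0 := hstrict
      omega
    have hnotwin : ∀ t, p' t < p t → ¬(j0 ≤ t ∧ t ≤ j0 + ℓ - 1) := by
      intro t hlt h
      rw [hwin t h.1 h.2] at hlt
      omega
    -- locate the strictly decreasing stack
    have hne1 : jst ≠ 1 := by intro h; rw [h] at hjstdec; omega
    have hnen : jst ≠ 2 * ℓ + 1 := by intro h; rw [h] at hjstdec; omega
    have hjw := hnotwin jst hjstdec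
    have hcase : (1 ≤ jst ∧ jst ≤ ℓ) ∨ (ℓ + 2 ≤ jst ∧ jst ≤ 2 * ℓ + 1) := by omega
    have hposA : 0 < ∑ j ∈ Finset.Icc 1 ℓ, (p j - p' j) := by
      rcases hcase with h | h
      · have h2 := Finset.single_le_sum (f := fun j => p j - p' j)
          (fun v _ => Nat.zero_le _) (Finset.mem_Icc.mpr h)
        beta_reduce at h2
        omega
      · have h2 := Finset.single_le_sum (f := fun j => p j - p' j)
          (fun v _ => Nat.zero_le _) (Finset.mem_Icc.mpr h)
        beta_reduce at h2
        omega
    have hposB : 0 < ∑ j ∈ Finset.Icc (ℓ + 2) (2 * ℓ + 1), (p j - p' j) := by omega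
    obtain ⟨t, htmem, ht2⟩ : ∃ t ∈ Finset.Icc 1 ℓ, p' t < p t := by
      by_contra hc
      push_neg at hc
      have hz : ∑ j ∈ Finset.Icc 1 ℓ, (p j - p' j) = 0 :=
        Finset.sum_eq_zero (fun v hv => by have := hc v hv; omega)
      omega
    obtain ⟨u, humem, hu2⟩ : ∃ u ∈ Finset.Icc (ℓ + 2) (2 * ℓ + 1), p' u < p u := by
      by_contra hc
      push_neg at hc
      have hz : ∑ j ∈ Finset.Icc (ℓ + 2) (2 * ℓ + 1), (p j - p' j) = 0 :=
        Finset.sum_eq_zero (fun v hv => by have := hc v hv; omega)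
      omega
    have htb := Finset.mem_Icc.mp htmem
    have hub := Finset.mem_Icc.mp humem
    have hts := hsupp' t (by omega) (by omega) ht2
    have hus := hsupp' u (by omega) (by omega) hu2
    have htw := hnotwin t ht2
    have huw := hnotwin u hu2
    omega
  · -- end move set {1, 2ℓ+1}
    have hfix : ∀ j, 1 ≤ j → j ≤ 2 * ℓ + 1 → j ≠ 1 → j ≠ 2 * ℓ + 1 → p' j = p j := by
      intro j h1 h2 h3 h4
      have h5 := hle j (Finset.mem_Icc.mpr ⟨h1, h2⟩)
      rcases eq_or_lt_of_le h5 with h | h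
      · exact h
      · have := hsupp j (Finset.mem_Icc.mpr ⟨h1, h2⟩) h
        simp only [Finset.mem_insert, Finset.mem_singleton] at this
        omega
    have hweq : ∀ i, 2 ≤ i → i ≤ ℓ + 1 → windowOdd ℓ p' i = windowOdd ℓ p i := by
      intro i h1 h2
      unfold windowOdd
      refine Finset.sum_congr rfl (fun t ht => ?_)
      have ht' := Finset.mem_Icc.mp ht
      exact hfix t (by omega) (by omega) (by omega) (by omega)
    have hsseq : sstarOdd ℓ p' = sstarOdd ℓ p := by
      unfold sstarOdd
      congr 1
      ext x
      simp only [Set.mem_setOf_eq]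
      constructor
      · rintro ⟨i, h1, h2, h3⟩; exact ⟨i, h1, h2, by rw [h3, hweq i h1 h2]⟩
      · rintro ⟨i, h1, h2, h3⟩; exact ⟨i, h1, h2, by rw [h3, hweq i h1 h2]⟩
    have hDA : ∑ j ∈ Finset.Icc 1 ℓ, (p j - p' j) = p 1 - p' 1 := by
      refine Finset.sum_eq_single_of_mem 1 (Finset.mem_Icc.mpr ⟨le_rfl, hℓ⟩)
        (fun t ht hne => ?_)
      have ht' := Finset.mem_Icc.mp ht
      have := hfix t (by omega) (by omega) (by omega) (by omega)
      omega
    have hDB : ∑ j ∈ Finset.Icc (ℓ + 2) (2 * ℓ + 1), (p j - p' j)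
        = p (2 * ℓ + 1) - p' (2 * ℓ + 1) := by
      refine Finset.sum_eq_single_of_mem (2 * ℓ + 1)
        (Finset.mem_Icc.mpr ⟨by omega, le_rfl⟩) (fun t ht hne => ?_)
      have ht' := Finset.mem_Icc.mp ht
      have := hfix t (by omega) (by omega) (by omega) (by omega)
      omega
    have hle1 := hle 1 (Finset.mem_Icc.mpr ⟨le_rfl, by omega⟩)
    have hlen := hle (2 * ℓ + 1) (Finset.mem_Icc.mpr ⟨by omega, le_rfl⟩)
    have hjsupp := hsupp jst hjstmem hjstdec
    simp only [Finset.mem_insert, Finset.mem_singleton] at hjsupp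
    have hdpos : p' 1 < p 1 ∧ p' (2 * ℓ + 1) < p (2 * ℓ + 1) := by
      rcases hjsupp with h | h <;> rw [h] at hjstdec <;> omega
    rw [hsseq] at hME'
    omega
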